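/- Start property of Protocol PIF: starting from any configuration, when there is a request for a process p to broadcast a message (i.e., Request_p = Wait), p starts a PIF-computation in finite time, i.e., p executes the starting action A1 (switching Request_p from Wait to In) within a finite number of steps of every execution. -/
import Mathlib


/-!
A formal model of Protocol PIF (Algorithm 1) in a fully-connected
message-passing system with unreliable, fair, single-message-capacity
channels.  Processes are `Fin n`; broadcast/feedback data range over `D`.

Every configuration is a possible initial configuration; an execution is an
infinite sequence of atomic steps, each step being an external request
(`env`), an external setting of a feedback message (`setF`), one of the
actions `A1`, `A2`, `A3` of Protocol PIF, or the loss of a message in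
transit.  Fairness of channels and weak fairness of enabled protocol actions
are part of the notion of execution.
-/

set_option autoImplicit false

namespace PIF

inductive Req where
  | Wait | In | Done
deriving DecidableEq

/-- A `⟨PIF, B, F, qState, pState⟩` message: the broadcast data, the feedback
data, the sender's `State[receiver]`, and the sender's `NeigState[receiver]`. -/
structure Msg (D : Type*) where
  b : D
  f : D
  sSt : Fin 5
  sNg : Fin 5

/-- A configuration: the variables of each process together with the contents
of every channel (single-message capacity, hence `Option`).
`chan p q` is the channel from `p` to `q`. -/
structure Cfg (n : ℕ) (D : Type*) where
  req : Fin n → Req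
  bmes : Fin n → D
  fmes : Fin n → Fin n → D
  st : Fin n → Fin n → Fin 5
  ng : Fin n → Fin n → Fin 5
  chan : Fin n → Fin n → Option (Msg D)

inductive Act (n : ℕ) (D : Type*) where
  /-- external request to broadcast `b`: `Request p := Wait`, `B-Mes p := b` -/
  | env (p : Fin n) (b : D)
  /-- the application externally sets the feedback message `F-Mes p [q] := f` -/
  | setF (p q : Fin n) (f : D)
  /-- action `A1` of process `p` (the starting action) -/
  | a1 (p : Fin n)
  /-- action `A2` of process `p` (decision or (re)sending) -/
  | a2 (p : Fin n)
  /-- action `A3`: process `p` receives message `m` from process `q` -/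
  | a3 (p q : Fin n) (m : Msg D)
  /-- the message in transit from `p` to `q` is lost -/
  | lose (p q : Fin n)

variable {n : ℕ} {D : Type*}

def upd2 {β : Type*} (f : Fin n → Fin n → β) (p q : Fin n) (v : β) :
    Fin n → Fin n → β :=
  fun a b => if a = p ∧ b = q then v else f a b

/-- Sending into a single-capacity unreliable channel: if the channel is full
the message is lost; if it is empty, the message is put in the channel or
lost. -/
def send (old : Option (Msg D)) (m : Msg D) (new : Option (Msg D)) : Prop :=
  (old ≠ none ∧ new = old) ∨ (old = none ∧ (new = some m ∨ new = none))

/-- The semantics of one atomic step `γ —A→ γ'`. -/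
def StepAt (γ : Cfg n D) : Act n D → Cfg n D → Prop
  | .env p b, γ' =>
      γ' = { γ with req := Function.update γ.req p .Wait,
                    bmes := Function.update γ.bmes p b }
  | .setF p q f, γ' =>
      γ' = { γ with fmes := upd2 γ.fmes p q f }
  | .a1 p, γ' =>
      γ.req p = .Wait ∧
      γ' = { γ with req := Function.update γ.req p .In,
                    st := Function.update γ.st p (fun _ => 0) }
  | .a2 p, γ' =>
      γ.req p = .In ∧
      (((∀ q, q ≠ p → γ.st p q = 4) ∧
          γ' = { γ with req := Function.update γ.req p .Done }) ∨
       ((¬ ∀ q, q ≠ p → γ.st p q = 4) ∧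
          γ'.req = γ.req ∧ γ'.bmes = γ.bmes ∧ γ'.fmes = γ.fmes ∧
          γ'.st = γ.st ∧ γ'.ng = γ.ng ∧
          (∀ q, q ≠ p → γ.st p q ≠ 4 →
            send (γ.chan p q) ⟨γ.bmes p, γ.fmes p q, γ.st p q, γ.ng p q⟩
              (γ'.chan p q)) ∧
          (∀ a b, ¬ (a = p ∧ b ≠ p ∧ γ.st p b ≠ 4) → γ'.chan a b = γ.chan a b)))
  | .a3 p q m, γ' =>
      q ≠ p ∧ γ.chan q p = some m ∧
      (let st' : Fin 5 :=
        if γ.st p q = m.sNg ∧ (γ.st p q : ℕ) < 4 then γ.st p q + 1 else γ.st p q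
       γ'.req = γ.req ∧ γ'.bmes = γ.bmes ∧ γ'.fmes = γ.fmes ∧
       γ'.st = upd2 γ.st p q st' ∧
       γ'.ng = upd2 γ.ng p q m.sSt ∧
       γ'.chan q p = none ∧
       (((m.sSt : ℕ) < 4 ∧
           send (γ.chan p q) ⟨γ.bmes p, γ.fmes p q, st', m.sSt⟩ (γ'.chan p q)) ∨
        (¬ (m.sSt : ℕ) < 4 ∧ γ'.chan p q = γ.chan p q)) ∧
       (∀ a b, ¬ (a = q ∧ b = p) → ¬ (a = p ∧ b = q) →
          γ'.chan a b = γ.chan a b))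
  | .lose p q, γ' =>
      (∃ m, γ.chan p q = some m) ∧
      γ'.req = γ.req ∧ γ'.bmes = γ.bmes ∧ γ'.fmes = γ.fmes ∧
      γ'.st = γ.st ∧ γ'.ng = γ.ng ∧
      γ'.chan p q = none ∧
      (∀ a b, ¬ (a = p ∧ b = q) → γ'.chan a b = γ.chan a b)

/-- A `receive-brd⟨B⟩ from q` event is generated at `p` in step `γ —A→ ·`. -/
def brdEvent (γ : Cfg n D) (A : Act n D) (p q : Fin n) (B : D) : Prop :=
  ∃ m : Msg D, A = .a3 p q m ∧ m.b = B ∧ γ.ng p q ≠ 3 ∧ m.sSt = 3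

/-- A `receive-fck⟨F⟩ from q` event is generated at `p` in step `γ —A→ ·`
(i.e. `State p [q]` switches from 3 to 4). -/
def fckEvent (γ : Cfg n D) (A : Act n D) (p q : Fin n) (F : D) : Prop :=
  ∃ m : Msg D, A = .a3 p q m ∧ m.f = F ∧ γ.st p q = 3 ∧ m.sNg = 3

def Enabled (γ : Cfg n D) (A : Act n D) : Prop := ∃ γ', StepAt γ A γ'

/-- The actions of the protocol proper (weak fairness applies to these). -/
def ProcAct : Act n D → Prop
  | .a1 _ => True
  | .a2 _ => True
  | .a3 _ _ _ => True
  | _ => False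

/-- Step `i` attempts to send a message from `p` to `q`. -/
def SendAttempt (γ : ℕ → Cfg n D) (act : ℕ → Act n D) (i : ℕ)
    (p q : Fin n) : Prop :=
  (act i = .a2 p ∧ (γ i).req p = .In ∧ q ≠ p ∧ (γ i).st p q ≠ 4 ∧
     ¬ ∀ r, r ≠ p → (γ i).st p r = 4) ∨
  (∃ m : Msg D, act i = .a3 p q m ∧ (m.sSt : ℕ) < 4)

/-- An execution: an infinite sequence of valid atomic steps starting from an
arbitrary configuration, in which (weak fairness) every protocol action that
is continuously enabled is eventually executed, and (channel fairness) if
infinitely many messages are sent from `p` to `q` then `q` receives a message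
from `p` infinitely often. -/
structure Exec (n : ℕ) (D : Type*) where
  γ : ℕ → Cfg n D
  act : ℕ → Act n D
  valid : ∀ i, StepAt (γ i) (act i) (γ (i + 1))
  wf : ∀ A : Act n D, ProcAct A →
        (∃ i, ∀ j, i ≤ j → Enabled (γ j) A) → ∀ i, ∃ j, i ≤ j ∧ act j = A
  chanFair : ∀ p q : Fin n, p ≠ q →
        (∀ i, ∃ j, i ≤ j ∧ SendAttempt γ act j p q) →
        ∀ i, ∃ j, i ≤ j ∧ ∃ m : Msg D, act j = .a3 q p m

/-- Hypothesis 1: while `Request p ≠ Done`, `Request p` is not externally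
set to `Wait`. -/
def Hyp1 (e : Exec n D) : Prop :=
  ∀ i p b, e.act i = .env p b → (e.γ i).req p = .Done

end PIF

namespace PIF

/-- **Start property of Protocol PIF.**  Starting from any
configuration, when there is a request for a process `p` to broadcast a
message (`Request p = Wait`), `p` starts a PIF-computation in finite time:
`p` executes the starting action `A1` within a finite number of steps. -/
theorem pif_start {n : ℕ} {D : Type*} (e : Exec n D) (p : Fin n) (i : ℕ)
    (hreq : (e.γ i).req p = .Wait) :
    ∃ j, i ≤ j ∧ e.act j = .a1 p := by
  by_contra h
  push_neg at h
  have hw : ∀ k, (e.γ (i + k)).req p = .Wait := by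
    intro k
    induction k with
    | zero => simpa using hreq
    | succ k ih =>
      have hv := e.valid (i + k)
      have hne : e.act (i + k) ≠ .a1 p := h (i + k) (Nat.le_add_right i k)
      rw [show i + (k + 1) = (i + k) + 1 from rfl]
      cases hA : e.act (i + k) with
      | env q b =>
        rw [hA] at hv; simp only [StepAt] at hv; rw [hv]
        by_cases hq : p = q
        · subst hq; simp
        · simpa [Function.update_of_ne hq] using ih
      | setF q r f =>
        rw [hA] at hv; simp only [StepAt] at hv; rw [hv]; exact ih
      | a1 q =>
        rw [hA] at hv; simp only [StepAt] at hv
        obtain ⟨-, hv⟩ := hv; rw [hv]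
        have hq : p ≠ q := fun hpq => hne (by rw [hA, hpq])
        simpa [Function.update_of_ne hq] using ih
      | a2 q =>
        rw [hA] at hv; simp only [StepAt] at hv
        obtain ⟨hIn, hv⟩ := hv
        have hq : p ≠ q := fun hpq => by rw [← hpq, ih] at hIn; cases hIn
        rcases hv with ⟨-, hv⟩ | ⟨-, hreq', -⟩
        · rw [hv]; simpa [Function.update_of_ne hq] using ih
        · rw [hreq']; exact ih
      | a3 q r m =>
        rw [hA] at hv; simp only [StepAt] at hv
        obtain ⟨-, -, hreq', -⟩ := hv
        rw [hreq']; exact ih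
      | lose q r =>
        rw [hA] at hv; simp only [StepAt] at hv
        obtain ⟨-, hreq', -⟩ := hv
        rw [hreq']; exact ih
  have hen : ∀ j, i ≤ j → Enabled (e.γ j) (Act.a1 p) := by
    intro j hij
    obtain ⟨k, rfl⟩ := Nat.exists_eq_add_of_le hij
    exact ⟨_, hw k, rfl⟩
  obtain ⟨j, hij, hact⟩ := e.wf (Act.a1 p) trivial ⟨i, hen⟩ i
  exact h j hij hact

end PIF
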